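/- Let X₁,…,Xₙ be independent mean-zero p-dimensional random vectors satisfying the conditions of the previous statement with p = o(√n). Then for any fixed nonzero a ∈ ℝᵖ the Lyapunov ratio (1/s_n⁴)·∑_{i=1}^n E[(aᵀX_i)⁴] → 0 as n → ∞, where s_n² = ∑_{i=1}^n aᵀ E[X_i X_iᵀ] a. -/

import Mathlib

open MeasureTheory ProbabilityTheory Filter

/-- Under bounded fourth moments, `λ_min(E[X_i X_iᵀ]) ≥ c > 0` and `p = o(√n)`, the
Lyapunov ratio `(1/s_n⁴) ∑_i E[(aᵀX_i)⁴]` tends to `0`, where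
`s_n² = ∑_i aᵀE[X_i X_iᵀ]a`. -/
theorem lyapunov_condition_holds {Ω : Type*} [MeasurableSpace Ω]
    (μ : Measure Ω) [IsProbabilityMeasure μ]
    (p : ℕ → ℕ)
    (X : (n : ℕ) → Fin n → Ω → Fin (p n) → ℝ)
    (a : (n : ℕ) → Fin (p n) → ℝ) (ha : ∀ n, 0 < n → a n ≠ 0)
    (M c : ℝ) (hc : 0 < c)
    (hmeas : ∀ n i, Measurable (X n i))
    (hindep : ∀ n, iIndepFun (X n) μ)
    (hmean : ∀ n i k, ∫ ω, X n i ω k ∂μ = 0)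
    (hint : ∀ n i j k, Integrable (fun ω => (X n i ω j) ^ 2 * (X n i ω k) ^ 2) μ)
    (hM : ∀ n i k, ∫ ω, (X n i ω k) ^ 4 ∂μ ≤ M)
    (hlammin : ∀ n i (v : Fin (p n) → ℝ),
      c * ∑ k, v k ^ 2 ≤ ∫ ω, (∑ k, v k * X n i ω k) ^ 2 ∂μ)
    (hp : Tendsto (fun n => (p n : ℝ) / Real.sqrt n) atTop (nhds 0)) :
    Tendsto (fun n =>
        (∑ i, ∫ ω, (∑ k, a n k * X n i ω k) ^ 4 ∂μ) /
          (∑ i, ∫ ω, (∑ k, a n k * X n i ω k) ^ 2 ∂μ) ^ 2)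
      atTop (nhds 0) := by
  set M' := max M 0 with hM'def
  have hM'0 : (0:ℝ) ≤ M' := le_max_right _ _
  -- fourth moments bounded by M'
  have hM4 : ∀ n i k, ∫ ω, (X n i ω k) ^ 4 ∂μ ≤ M' :=
    fun n i k => (hM n i k).trans (le_max_left _ _)
  -- cross second moments bounded by M'
  have hcross : ∀ n i j k, ∫ ω, (X n i ω j) ^ 2 * (X n i ω k) ^ 2 ∂μ ≤ M' := by
    intro n i j k
    have hintj : Integrable (fun ω => (X n i ω j) ^ 4) μ :=
      (hint n i j j).congr (Filter.Eventually.of_forall fun ω => by ring)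
    have hintk : Integrable (fun ω => (X n i ω k) ^ 4) μ :=
      (hint n i k k).congr (Filter.Eventually.of_forall fun ω => by ring)
    have h1 : ∫ ω, (X n i ω j) ^ 2 * (X n i ω k) ^ 2 ∂μ ≤
        ∫ ω, ((X n i ω j) ^ 4 + (X n i ω k) ^ 4) / 2 ∂μ := by
      refine integral_mono (hint n i j k) ((hintj.add hintk).div_const 2) ?_
      intro ω
      have := sq_nonneg ((X n i ω j) ^ 2 - (X n i ω k) ^ 2)
      simp only []
      nlinarith
    have h2 : ∫ ω, ((X n i ω j) ^ 4 + (X n i ω k) ^ 4) / 2 ∂μ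
        = ((∫ ω, (X n i ω j) ^ 4 ∂μ) + ∫ ω, (X n i ω k) ^ 4 ∂μ) / 2 := by
      rw [integral_div, integral_add hintj hintk]
    have h3 : ((∫ ω, (X n i ω j) ^ 4 ∂μ) + ∫ ω, (X n i ω k) ^ 4 ∂μ) / 2 ≤ M' := by
      have := hM4 n i j; have := hM4 n i k; linarith
    linarith [h1, h2.le, h2.ge]
  -- per-vector fourth moment bound
  have hN1 : ∀ n i, ∫ ω, (∑ k, a n k * X n i ω k) ^ 4 ∂μ ≤
      (∑ k, (a n k) ^ 2) ^ 2 * ((p n : ℝ) ^ 2 * M') := by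
    intro n i
    have hg : Integrable (fun ω =>
        (∑ k, (a n k) ^ 2) ^ 2 * ∑ j, ∑ k, (X n i ω j) ^ 2 * (X n i ω k) ^ 2) μ := by
      exact (integrable_finset_sum _ fun j _ =>
        integrable_finset_sum _ fun k _ => hint n i j k).const_mul _
    have step1 : ∫ ω, (∑ k, a n k * X n i ω k) ^ 4 ∂μ ≤
        ∫ ω, (∑ k, (a n k) ^ 2) ^ 2 * ∑ j, ∑ k, (X n i ω j) ^ 2 * (X n i ω k) ^ 2 ∂μ := by
      refine integral_mono_of_nonneg (Filter.Eventually.of_forall fun ω => by positivity)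
        hg (Filter.Eventually.of_forall fun ω => ?_)
      have hcs : (∑ k, a n k * X n i ω k) ^ 2 ≤
          (∑ k, (a n k) ^ 2) * ∑ k, (X n i ω k) ^ 2 :=
        Finset.sum_mul_sq_le_sq_mul_sq _ _ _
      have h4 : (∑ k, a n k * X n i ω k) ^ 4 ≤
          ((∑ k, (a n k) ^ 2) * ∑ k, (X n i ω k) ^ 2) ^ 2 := by
        calc (∑ k, a n k * X n i ω k) ^ 4
            = ((∑ k, a n k * X n i ω k) ^ 2) ^ 2 := by ring
          _ ≤ ((∑ k, (a n k) ^ 2) * ∑ k, (X n i ω k) ^ 2) ^ 2 :=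
              pow_le_pow_left₀ (sq_nonneg _) hcs 2
      refine h4.trans (le_of_eq ?_)
      have hexp : (∑ k, (X n i ω k) ^ 2) ^ 2 = ∑ j, ∑ k, (X n i ω j) ^ 2 * (X n i ω k) ^ 2 := by
        rw [sq, Finset.sum_mul_sum]
      rw [mul_pow, hexp]
    have step2 : ∫ ω, (∑ k, (a n k) ^ 2) ^ 2 * ∑ j, ∑ k, (X n i ω j) ^ 2 * (X n i ω k) ^ 2 ∂μ
        = (∑ k, (a n k) ^ 2) ^ 2 * ∑ j, ∑ k, ∫ ω, (X n i ω j) ^ 2 * (X n i ω k) ^ 2 ∂μ := by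
      rw [integral_const_mul]
      congr 1
      rw [integral_finset_sum _ fun j _ => integrable_finset_sum _ fun k _ => hint n i j k]
      exact Finset.sum_congr rfl fun j _ =>
        integral_finset_sum _ fun k _ => hint n i j k
    have step3 : ∑ j, ∑ k, ∫ ω, (X n i ω j) ^ 2 * (X n i ω k) ^ 2 ∂μ ≤ (p n : ℝ) ^ 2 * M' := by
      calc ∑ j, ∑ k, ∫ ω, (X n i ω j) ^ 2 * (X n i ω k) ^ 2 ∂μ
          ≤ ∑ j : Fin (p n), ((p n : ℝ) * M') := by
            refine Finset.sum_le_sum fun j _ => ?_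
            calc ∑ k, ∫ ω, (X n i ω j) ^ 2 * (X n i ω k) ^ 2 ∂μ
                ≤ ∑ k : Fin (p n), M' := Finset.sum_le_sum fun k _ => hcross n i j k
              _ = (p n : ℝ) * M' := by simp [mul_comm]
        _ = (p n : ℝ) ^ 2 * M' := by simp; ring
    calc ∫ ω, (∑ k, a n k * X n i ω k) ^ 4 ∂μ
        ≤ (∑ k, (a n k) ^ 2) ^ 2 * ∑ j, ∑ k, ∫ ω, (X n i ω j) ^ 2 * (X n i ω k) ^ 2 ∂μ := by
          rw [← step2]; exact step1
      _ ≤ (∑ k, (a n k) ^ 2) ^ 2 * ((p n : ℝ) ^ 2 * M') := by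
          exact mul_le_mul_of_nonneg_left step3 (by positivity)
  -- nonnegativity of the ratio
  have hfnonneg : ∀ n, 0 ≤
      (∑ i, ∫ ω, (∑ k, a n k * X n i ω k) ^ 4 ∂μ) /
        (∑ i, ∫ ω, (∑ k, a n k * X n i ω k) ^ 2 ∂μ) ^ 2 := by
    intro n
    refine div_nonneg (Finset.sum_nonneg fun i _ => ?_) (sq_nonneg _)
    exact integral_nonneg fun ω => by positivity
  -- the dominating sequence
  set g : ℕ → ℝ := fun n => (M' / c ^ 2) * ((p n : ℝ) / Real.sqrt n) ^ 2 with hgdef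
  have hgnonneg : ∀ n, 0 ≤ g n := fun n => by positivity
  have hfle : ∀ n,
      (∑ i, ∫ ω, (∑ k, a n k * X n i ω k) ^ 4 ∂μ) /
        (∑ i, ∫ ω, (∑ k, a n k * X n i ω k) ^ 2 ∂μ) ^ 2 ≤ g n := by
    intro n
    rcases Nat.eq_zero_or_pos n with hn0 | hn
    · subst hn0; simpa using hgnonneg 0
    rcases Nat.eq_zero_or_pos (p n) with hpn0 | hpn
    · -- p n = 0 : numerator is zero
      have : ∀ i : Fin n, ∫ ω, (∑ k, a n k * X n i ω k) ^ 4 ∂μ = 0 := by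
        intro i
        have : ∀ ω, (∑ k, a n k * X n i ω k) = 0 := fun ω =>
          Finset.sum_eq_zero fun k _ => absurd k.isLt (by omega)
        simp only [this]
        simp
      rw [Finset.sum_congr rfl fun i _ => this i]
      simpa using hgnonneg n
    · -- main case
      set A := ∑ k, (a n k) ^ 2 with hAdef
      have hA : 0 < A := by
        obtain ⟨k, hk⟩ := Function.ne_iff.mp (ha n hn)
        exact Finset.sum_pos' (fun k _ => sq_nonneg _) ⟨k, Finset.mem_univ k, (even_two.pow_pos_iff two_ne_zero).mpr hk⟩
      have hNum : (∑ i, ∫ ω, (∑ k, a n k * X n i ω k) ^ 4 ∂μ) ≤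
          (n : ℝ) * (A ^ 2 * ((p n : ℝ) ^ 2 * M')) := by
        calc (∑ i, ∫ ω, (∑ k, a n k * X n i ω k) ^ 4 ∂μ)
            ≤ ∑ _i : Fin n, A ^ 2 * ((p n : ℝ) ^ 2 * M') :=
              Finset.sum_le_sum fun i _ => hN1 n i
          _ = (n : ℝ) * (A ^ 2 * ((p n : ℝ) ^ 2 * M')) := by simp [mul_comm]
      have hDen : (n : ℝ) * (c * A) ≤ ∑ i, ∫ ω, (∑ k, a n k * X n i ω k) ^ 2 ∂μ := by
        calc (n : ℝ) * (c * A) = ∑ _i : Fin n, c * A := by simp [mul_comm]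
          _ ≤ ∑ i, ∫ ω, (∑ k, a n k * X n i ω k) ^ 2 ∂μ :=
              Finset.sum_le_sum fun i _ => hlammin n i (a n)
      have hden_pos : (0:ℝ) < (n : ℝ) * (c * A) := by
        have : (0:ℝ) < (n:ℝ) := by exact_mod_cast hn
        positivity
      have hineq : (∑ i, ∫ ω, (∑ k, a n k * X n i ω k) ^ 4 ∂μ) /
          (∑ i, ∫ ω, (∑ k, a n k * X n i ω k) ^ 2 ∂μ) ^ 2 ≤
          ((n : ℝ) * (A ^ 2 * ((p n : ℝ) ^ 2 * M'))) / ((n : ℝ) * (c * A)) ^ 2 := by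
        refine div_le_div₀ (by positivity) hNum (by positivity) ?_
        exact pow_le_pow_left₀ hden_pos.le hDen 2
      refine hineq.trans (le_of_eq ?_)
      have hnpos : (0:ℝ) < (n:ℝ) := by exact_mod_cast hn
      have hsq : Real.sqrt n ^ 2 = (n:ℝ) := Real.sq_sqrt hnpos.le
      rw [hgdef]
      simp only [div_pow, hsq]
      field_simp
  have hg0 : Tendsto g atTop (nhds 0) := by
    have h2 : Tendsto (fun n => ((p n : ℝ) / Real.sqrt n) ^ 2) atTop (nhds 0) := by
      simpa using hp.pow 2
    simpa using h2.const_mul (M' / c ^ 2)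
  exact squeeze_zero hfnonneg hfle hg0
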